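/- arXiv:1007.3047 — 2 statements merged into one kernel-verified Lean document; each statement's English description precedes it below -/
import Mathlib

section
/- Let (K,∂) be a differential field of characteristic 0 whose field of constants C is algebraically closed, and assume K itself is algebraically closed. Let (𝒦,∂) be a differential field extension of K with the same field of constants C. Let y_1,…,y_n ∈ 𝒦^× be such that a_i := ∂y_i/y_i ∈ K for every i. If for every (m_1,…,m_n) ∈ ℤ^n \ {0} the element m_1a_1 + ⋯ + m_na_n does not lie in ∂ℓn(K^×), then y_1,…,y_n are algebraically independent over K; equivalently, the transcendence degree of K(y_1,…,y_n) over K equals n. (Kolchin's theorem on 𝔾_m^n, §2 item 1.) -/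
/-!
Write `Y m = ∏ yᵢ ^ mᵢ` for `m ∈ ℤⁿ`; then `∂(Y m) = φ(m) · Y m` with `φ(m) = ∑ mᵢ aᵢ ∈ K`.
Take a shortest `K`-linear relation among the `Y m`, normalised to have coefficient `1` at
`Y m₀`. Applying `∂ - φ(m₀)` kills that term and gives a shorter relation, so its coefficients
vanish: every other coefficient `c` satisfies `∂c + φ(m - m₀) c = 0`, that is
`φ(m - m₀) = ∂(c⁻¹)/c⁻¹`, which the hypothesis forbids. Hence the Laurent monomials in the `yᵢ`,
and in particular the monomials, are linearly independent over `K`.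
-/

open Differential

def Derivation.ofLeibniz {F : Type*} [Field F] (D : F → F) (hadd : ∀ a b, D (a + b) = D a + D b)
    (hmul : ∀ a b, D (a * b) = a * D b + D a * b) : Derivation ℤ F F :=
  Derivation.mk' (AddMonoidHom.mk' D hadd).toIntLinearMap fun a b => by
    simp [hmul, mul_comm]

namespace Differential

variable {R : Type*} [Field R] [Differential R]

theorem deriv_eq_logDeriv_mul (a : R) : a′ = logDeriv a * a := by
  rcases eq_or_ne a 0 with rfl | ha
  · simp
  · rw [logDeriv, div_mul_cancel₀ _ ha]

theorem logDeriv_inv (a : R) : logDeriv a⁻¹ = -logDeriv a := by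
  rcases eq_or_ne a 0 with rfl | ha
  · simp
  · simpa using logDeriv_div 1 a one_ne_zero ha

theorem logDeriv_zpow (a : R) (k : ℤ) : logDeriv (a ^ k) = k * logDeriv a := by
  rcases eq_or_ne a 0 with rfl | ha
  · rcases eq_or_ne k 0 with rfl | hk <;> simp [zero_zpow, *]
  · rw [logDeriv, Derivation.leibniz_zpow, logDeriv, zpow_sub_one₀ ha]
    simp only [zsmul_eq_mul, smul_eq_mul]
    field_simp

end Differential

theorem MvPolynomial.algebraicIndependent_of_linearIndependent_monomials
    {R A σ : Type*} [CommRing R] [CommRing A] [Algebra R A] (x : σ → A)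
    (h : LinearIndependent R fun v : σ →₀ ℕ => v.prod fun i k => x i ^ k) :
    AlgebraicIndependent R x := by
  have aeval_eq : (aeval x).toLinearMap =
      Finsupp.linearCombination R (fun v : σ →₀ ℕ => v.prod fun i k => x i ^ k) ∘ₗ
        (basisMonomials σ R).repr.toLinearMap :=
    (basisMonomials σ R).ext fun v => by
      rw [LinearMap.comp_apply, LinearEquiv.coe_coe, Module.Basis.repr_self]
      simp [aeval_monomial]
  rw [algebraicIndependent_iff_injective_aeval]
  change Function.Injective (aeval x).toLinearMap
  rw [aeval_eq, LinearMap.coe_comp]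
  exact Function.Injective.comp h (basisMonomials σ R).repr.injective

section LinearIndependence

variable {𝒦 : Type*} [Field 𝒦] [Differential 𝒦] {G : Type*} [AddCommGroup G]
  {φ : G →+ 𝒦} {Y : G → 𝒦}

theorem deriv_sum_mul_sub_mul_sum (hY : ∀ g, logDeriv (Y g) = φ g) (s : Finset G) (c : G → 𝒦)
    (g₀ : G) :
    (∑ g ∈ s, c g * Y g)′ - φ g₀ * ∑ g ∈ s, c g * Y g =
      ∑ g ∈ s, ((c g)′ + φ (g - g₀) * c g) * Y g := by
  simp only [map_sum, Derivation.leibniz, smul_eq_mul, Finset.mul_sum, ← Finset.sum_sub_distrib]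
  refine Finset.sum_congr rfl fun g _ => ?_
  rw [deriv_eq_logDeriv_mul (Y g), hY, map_sub]
  ring

theorem eq_zero_of_sum_mul_eq_zero_of_logDeriv (K : Subfield 𝒦) (hK : ∀ x ∈ K, x′ ∈ K)
    (hφK : ∀ g, φ g ∈ K) (hY0 : ∀ g, Y g ≠ 0) (hY : ∀ g, logDeriv (Y g) = φ g)
    (hφ : ∀ g ≠ 0, ∀ u ∈ K, u ≠ 0 → logDeriv u ≠ φ g) (s : Finset G) :
    ∀ c : G → 𝒦, (∀ g ∈ s, c g ∈ K) → ∑ g ∈ s, c g * Y g = 0 → ∀ g ∈ s, c g = 0 := by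
  classical
  induction s using Finset.induction_on with
  | empty => simp
  | insert g₀ s hg₀ ih =>
  intro c hcK hrel
  rw [Finset.forall_mem_insert] at hcK ⊢
  rw [Finset.sum_insert hg₀] at hrel
  have hc₀ : c g₀ = 0 := by
    by_contra hc₀
    set d : G → 𝒦 := fun g => c g / c g₀
    have hdK : ∀ g ∈ s, d g ∈ K := fun g hg => K.div_mem (hcK.2 g hg) hcK.1
    have hrel' : ∑ g ∈ s, d g * Y g = -Y g₀ := by
      simp only [d, div_mul_eq_mul_div, ← Finset.sum_div]
      field_simp
      linear_combination hrel
    have htwist : ∑ g ∈ s, ((d g)′ + φ (g - g₀) * d g) * Y g = 0 := by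
      rw [← deriv_sum_mul_sub_mul_sum hY, hrel', map_neg, deriv_eq_logDeriv_mul (Y g₀), hY]
      ring
    have hd : ∀ g ∈ s, d g = 0 := by
      intro g hg
      by_contra hdg
      have hdg' := ih _ (fun g hg => K.add_mem (hK _ (hdK g hg)) (K.mul_mem (hφK _) (hdK g hg)))
        htwist g hg
      refine hφ (g - g₀) (sub_ne_zero.mpr (ne_of_mem_of_not_mem hg hg₀)) (d g)⁻¹
        (K.inv_mem (hdK g hg)) (inv_ne_zero hdg) ?_
      rw [Differential.logDeriv_inv, Differential.logDeriv]
      field_simp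
      linear_combination -hdg'
    rw [Finset.sum_eq_zero fun g hg => by rw [hd g hg, zero_mul]] at hrel'
    exact hY0 g₀ (neg_eq_zero.mp hrel'.symm)
  rw [hc₀, zero_mul, zero_add] at hrel
  exact ⟨hc₀, ih c hcK.2 hrel⟩

theorem linearIndependent_of_logDeriv_ne (K : Subfield 𝒦) (hK : ∀ x ∈ K, x′ ∈ K)
    (hφK : ∀ g, φ g ∈ K) (hY0 : ∀ g, Y g ≠ 0) (hY : ∀ g, logDeriv (Y g) = φ g)
    (hφ : ∀ g ≠ 0, ∀ u ∈ K, u ≠ 0 → logDeriv u ≠ φ g) : LinearIndependent K Y :=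
  linearIndependent_iff'.mpr fun s c hrel g hg => by
    exact_mod_cast eq_zero_of_sum_mul_eq_zero_of_logDeriv K hK hφK hY0 hY hφ s (fun g => c g)
      (fun g _ => (c g).2) hrel g hg

end LinearIndependence

theorem kolchin_theorem_on_Gm_n_general
    (𝒦 : Type*) [Field 𝒦]
    (D : 𝒦 → 𝒦)
    (hadd : ∀ a b : 𝒦, D (a + b) = D a + D b)
    (hmul : ∀ a b : 𝒦, D (a * b) = a * D b + D a * b)
    -- the base field K, a differential subfield, algebraically closed
    (K : Subfield 𝒦) (hDK : ∀ x ∈ K, D x ∈ K)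
    -- the data
    (n : ℕ) (y : Fin n → 𝒦ˣ) (a : Fin n → 𝒦)
    (ha : ∀ i, a i = D (y i) / (y i : 𝒦))
    (haK : ∀ i, a i ∈ K)
    -- non-degeneracy: no nonzero integer combination of the aᵢ is a logarithmic
    -- derivative of an element of K^×
    (hnd : ∀ m : Fin n → ℤ, m ≠ 0 →
      ¬ ∃ u : 𝒦, u ∈ K ∧ u ≠ 0 ∧ (∑ i, (m i : 𝒦) * a i) = D u / u) :
    AlgebraicIndependent K (fun i => (y i : 𝒦)) := by
  let _ : Differential 𝒦 := ⟨Derivation.ofLeibniz D hadd hmul⟩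
  let φ : (Fin n → ℤ) →+ 𝒦 := AddMonoidHom.mk' (fun m => ∑ i, (m i : 𝒦) * a i) fun m m' => by
    simp [add_mul, Finset.sum_add_distrib]
  let Y : (Fin n → ℤ) → 𝒦 := fun m => ∏ i, (y i : 𝒦) ^ m i
  have hY : ∀ m, logDeriv (Y m) = φ m := fun m => by
    rw [Differential.logDeriv_prod _ _ _ fun i _ => zpow_ne_zero _ (y i).ne_zero]
    refine Finset.sum_congr rfl fun i _ => ?_
    rw [Differential.logDeriv_zpow, ha]
    rfl
  have hlin : LinearIndependent K Y :=
    linearIndependent_of_logDeriv_ne K hDK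
      (fun m => show ∑ i, (m i : 𝒦) * a i ∈ K from
        K.sum_mem fun i _ => K.mul_mem (K.intCast_mem _) (haK i))
      (fun m => Finset.prod_ne_zero_iff.mpr fun i _ => zpow_ne_zero _ (y i).ne_zero) hY
      fun m hm u hu hu0 h => hnd m hm ⟨u, hu, hu0, h.symm⟩
  have monomial_eq : (fun v : Fin n →₀ ℕ => v.prod fun i k => (y i : 𝒦) ^ k) =
      Y ∘ fun v i => (v i : ℤ) := by
    funext v
    simp [Y, Finsupp.prod_fintype]
  refine MvPolynomial.algebraicIndependent_of_linearIndependent_monomials _ ?_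
  rw [monomial_eq]
  exact hlin.comp _ fun v w h => Finsupp.ext fun i => by simpa using congrFun h i

/-- **Kolchin's theorem on 𝔾ₘⁿ** (§2, item 1).
Let `(𝒦, D)` be a differential field of characteristic zero, `K` a subfield stable
under the derivation `D`, with `K` algebraically closed, and let `C` be the common
field of constants of `𝒦` (and of `K`), assumed algebraically closed and contained
in `K`.  If `y₁, …, yₙ ∈ 𝒦ˣ` satisfy `aᵢ := D yᵢ / yᵢ ∈ K` and for every nonzero
integer vector `(m₁, …, mₙ)` the combination `m₁a₁ + ⋯ + mₙaₙ` is not a logarithmic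
derivative `D u / u` of an element `u ∈ Kˣ`, then `y₁, …, yₙ` are algebraically
independent over `K` (equivalently, `trdeg K(y₁,…,yₙ)/K = n`). -/
theorem kolchin_theorem_on_Gm_n
    (𝒦 : Type*) [Field 𝒦] [CharZero 𝒦]
    (D : 𝒦 → 𝒦)
    (hadd : ∀ a b : 𝒦, D (a + b) = D a + D b)
    (hmul : ∀ a b : 𝒦, D (a * b) = a * D b + D a * b)
    -- the base field K, a differential subfield, algebraically closed
    (K : Subfield 𝒦) (hDK : ∀ x ∈ K, D x ∈ K) (hKac : IsAlgClosed K)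
    -- the field of constants C of 𝒦, contained in K (so that K and 𝒦 have the
    -- same field of constants), algebraically closed
    (C : Subfield 𝒦) (hC : ∀ x : 𝒦, D x = 0 ↔ x ∈ C)
    (hCK : C ≤ K) (hCac : IsAlgClosed C)
    -- the data
    (n : ℕ) (y : Fin n → 𝒦ˣ) (a : Fin n → 𝒦)
    (ha : ∀ i, a i = D (y i) / (y i : 𝒦))
    (haK : ∀ i, a i ∈ K)
    -- non-degeneracy: no nonzero integer combination of the aᵢ is a logarithmic
    -- derivative of an element of K^×
    (hnd : ∀ m : Fin n → ℤ, m ≠ 0 →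
      ¬ ∃ u : 𝒦, u ∈ K ∧ u ≠ 0 ∧ (∑ i, (m i : 𝒦) * a i) = D u / u) :
    AlgebraicIndependent K (fun i => (y i : 𝒦)) :=
  kolchin_theorem_on_Gm_n_general 𝒦 D hadd hmul K hDK n y a ha haK hnd
end

section
/- Let (K,∂) be a differential field and let (V,∇) be a differential module over K which is semisimple, i.e. every differential submodule of V admits a differential submodule complement. Let N_1 and N_2 be differential submodules of V and let a ∈ V. If a ∈ ∇(V) + N_1 and a ∈ ∇(V) + N_2, then a ∈ ∇(V) + (N_1 ∩ N_2). (Consequently, the set of differential submodules N of V with a ∈ ∇(V) + N has a unique minimal element, as asserted in §3.2.) -/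
/-!
If `a = ∇v₁ + m₁ = ∇v₂ + m₂` with `mᵢ ∈ Nᵢ`, then `∇(v₁ - v₂) = m₂ - m₁` lies in `M = N₁ + N₂`.
Splitting `v₁ - v₂` along a `∇`-stable complement `M'` of `M`, the `M'`-component has
`∇`-image in `M ∩ M' = 0`, so `m₂ - m₁ = ∇p` for some `p = u₁ + u₂ ∈ M` with `uᵢ ∈ Nᵢ`.
Then `a = ∇(v₁ - u₁) + (m₁ + ∇u₁)`, and `m₁ + ∇u₁ = m₂ - ∇u₂` lies in `N₁ ∩ N₂`.
-/

section StableSubmodule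

variable {R V : Type*} [Ring R] [AddCommGroup V] [Module R V] (f : V →+ V)

theorem sup_apply_mem_of_apply_mem {N₁ N₂ : Submodule R V}
    (h₁ : ∀ w ∈ N₁, f w ∈ N₁) (h₂ : ∀ w ∈ N₂, f w ∈ N₂) :
    ∀ w ∈ N₁ ⊔ N₂, f w ∈ N₁ ⊔ N₂ := by
  intro w hw
  obtain ⟨x, hx, y, hy, rfl⟩ := Submodule.mem_sup.mp hw
  rw [map_add]
  exact Submodule.add_mem_sup (h₁ x hx) (h₂ y hy)

theorem exists_mem_apply_eq_of_isCompl {M M' : Submodule R V}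
    (hM : ∀ w ∈ M, f w ∈ M) (hM' : ∀ w ∈ M', f w ∈ M') (hc : IsCompl M M')
    {x : V} (hx : f x ∈ M) : ∃ p ∈ M, f p = f x := by
  obtain ⟨p, hp, q, hq, rfl⟩ :=
    Submodule.mem_sup.mp (hc.sup_eq_top ▸ Submodule.mem_top : x ∈ M ⊔ M')
  have hqM : f q ∈ M := by
    have h : f (p + q) - f p ∈ M := M.sub_mem hx (hM p hp)
    rwa [map_add, add_sub_cancel_left] at h
  have hq0 : f q = 0 := Submodule.disjoint_def.mp hc.disjoint _ hqM (hM' q hq)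
  exact ⟨p, hp, by rw [map_add, hq0, add_zero]⟩

theorem exists_apply_add_mem_inf {N₁ N₂ : Submodule R V}
    (h₁ : ∀ w ∈ N₁, f w ∈ N₁) (h₂ : ∀ w ∈ N₂, f w ∈ N₂)
    (hc : ∃ M' : Submodule R V, (∀ w ∈ M', f w ∈ M') ∧ IsCompl (N₁ ⊔ N₂) M') {a : V}
    (ha₁ : ∃ v : V, ∃ m ∈ N₁, a = f v + m) (ha₂ : ∃ v : V, ∃ m ∈ N₂, a = f v + m) :
    ∃ v : V, ∃ m ∈ N₁ ⊓ N₂, a = f v + m := by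
  obtain ⟨v₁, m₁, hm₁, rfl⟩ := ha₁
  obtain ⟨v₂, m₂, hm₂, ha⟩ := ha₂
  obtain ⟨M', hM', hc⟩ := hc
  have hdiff : f (v₁ - v₂) = m₂ - m₁ := by
    rw [map_sub]
    linear_combination (norm := abel) ha
  have hdiff_mem : f (v₁ - v₂) ∈ N₁ ⊔ N₂ :=
    hdiff ▸ Submodule.sub_mem _ (Submodule.mem_sup_right hm₂) (Submodule.mem_sup_left hm₁)
  obtain ⟨p, hp, hfp⟩ :=
    exists_mem_apply_eq_of_isCompl f (sup_apply_mem_of_apply_mem f h₁ h₂) hM' hc hdiff_mem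
  obtain ⟨u₁, hu₁, u₂, hu₂, rfl⟩ := Submodule.mem_sup.mp hp
  have hm : m₁ + f u₁ = m₂ - f u₂ := by
    rw [hdiff, map_add] at hfp
    linear_combination (norm := abel) hfp
  refine ⟨v₁ - u₁, m₁ + f u₁, ⟨N₁.add_mem hm₁ (h₁ u₁ hu₁), ?_⟩, ?_⟩
  · exact hm ▸ N₂.sub_mem hm₂ (h₂ u₂ hu₂)
  · rw [map_sub]
    abel

end StableSubmodule

theorem semisimple_min_submodule_general
    (K : Type*) [Field K]
    (V : Type*) [AddCommGroup V] [Module K V]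
    -- the connection ∇, additive and satisfying the Leibniz rule over (K, D)
    (del : V → V)
    (hdeladd : ∀ v w : V, del (v + w) = del v + del w)
    -- semisimplicity: every ∇-stable subspace has a ∇-stable complement
    (hss : ∀ W : Submodule K V, (∀ w ∈ W, del w ∈ W) →
      ∃ W' : Submodule K V, (∀ w ∈ W', del w ∈ W') ∧ IsCompl W W')
    -- two differential submodules N₁, N₂
    (N₁ N₂ : Submodule K V)
    (hN₁ : ∀ w ∈ N₁, del w ∈ N₁) (hN₂ : ∀ w ∈ N₂, del w ∈ N₂)
    (a : V)
    (ha₁ : ∃ v : V, ∃ m ∈ N₁, a = del v + m)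
    (ha₂ : ∃ v : V, ∃ m ∈ N₂, a = del v + m) :
    ∃ v : V, ∃ m ∈ N₁ ⊓ N₂, a = del v + m :=
  let f : V →+ V := AddMonoidHom.mk' del hdeladd
  exists_apply_add_mem_inf f hN₁ hN₂ (hss _ (sup_apply_mem_of_apply_mem f hN₁ hN₂)) ha₁ ha₂

/-- **Unique minimal element of `{N : a ∈ ∇(V) + N}`** (§3.2): let `(V, ∇)` be a
semisimple differential module over a differential field `(K, D)`.  If `N₁, N₂`
are differential submodules of `V` and `a ∈ ∇(V) + N₁` and `a ∈ ∇(V) + N₂`, then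
`a ∈ ∇(V) + (N₁ ∩ N₂)`. -/
theorem semisimple_min_submodule
    (K : Type*) [Field K]
    (D : K → K)
    (hadd : ∀ a b : K, D (a + b) = D a + D b)
    (hmul : ∀ a b : K, D (a * b) = a * D b + D a * b)
    (V : Type*) [AddCommGroup V] [Module K V]
    -- the connection ∇, additive and satisfying the Leibniz rule over (K, D)
    (del : V → V)
    (hdeladd : ∀ v w : V, del (v + w) = del v + del w)
    (hdelsmul : ∀ (c : K) (v : V), del (c • v) = D c • v + c • del v)
    -- semisimplicity: every ∇-stable subspace has a ∇-stable complement
    (hss : ∀ W : Submodule K V, (∀ w ∈ W, del w ∈ W) →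
      ∃ W' : Submodule K V, (∀ w ∈ W', del w ∈ W') ∧ IsCompl W W')
    -- two differential submodules N₁, N₂
    (N₁ N₂ : Submodule K V)
    (hN₁ : ∀ w ∈ N₁, del w ∈ N₁) (hN₂ : ∀ w ∈ N₂, del w ∈ N₂)
    (a : V)
    (ha₁ : ∃ v : V, ∃ m ∈ N₁, a = del v + m)
    (ha₂ : ∃ v : V, ∃ m ∈ N₂, a = del v + m) :
    ∃ v : V, ∃ m ∈ N₁ ⊓ N₂, a = del v + m :=
  semisimple_min_submodule_general K V del hdeladd hss N₁ N₂ hN₁ hN₂ a ha₁ ha₂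
end
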